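/- Let a, a', c, c' ∈ ℝ² with a ≠ a', c ≠ c', and suppose the perpendicular bisectors of {a,a'} and of {c,c'} meet in exactly one point o. If b, d ∈ ℝ² satisfy: the bisector of a,b equals the bisector of c,d, the bisector of a',b equals the bisector of c',d, and these two bisectors are distinct, then |ob| = |oa| and |od| = |oc|; i.e. b lies on the circle about o through a and a', and d lies on the circle about o through c and c'. -/
import Mathlib


/-- The perpendicular bisector of two points in the Euclidean plane,
as the set of points equidistant from both. -/
def bisector (p q : EuclideanSpace ℝ (Fin 2)) : Set (EuclideanSpace ℝ (Fin 2)) :=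
  {x | dist x p = dist x q}

open AffineSubspace in
lemma bisector_eq_perpBisector (p q : EuclideanSpace ℝ (Fin 2)) :
    bisector p q = (perpBisector p q : Set (EuclideanSpace ℝ (Fin 2))) := by
  ext x
  simp [bisector, mem_perpBisector_iff_dist_eq]

lemma span_eq_of_orth_eq {u w : EuclideanSpace ℝ (Fin 2)}
    (h : (ℝ ∙ u : Submodule ℝ _)ᗮ = (ℝ ∙ w : Submodule ℝ _)ᗮ) :
    (ℝ ∙ u : Submodule ℝ _) = ℝ ∙ w := by
  have := congrArg Submodule.orthogonal h
  rwa [Submodule.orthogonal_orthogonal, Submodule.orthogonal_orthogonal] at this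

open AffineSubspace Module

theorem stmt_12 (a a' c c' b d o : EuclideanSpace ℝ (Fin 2))
    (haa' : a ≠ a') (hcc' : c ≠ c')
    (hmeet : bisector a a' ∩ bisector c c' = {o})
    (hab : a ≠ b) (hcd : c ≠ d) (ha'b : a' ≠ b) (hc'd : c' ≠ d)
    (h1 : bisector a b = bisector c d)
    (h2 : bisector a' b = bisector c' d)
    (hne : bisector a b ≠ bisector a' b) :
    dist o b = dist o a ∧ dist o d = dist o c := by
  have h1' : perpBisector a b = perpBisector c d := by
    apply SetLike.coe_injective
    rw [← bisector_eq_perpBisector, ← bisector_eq_perpBisector]; exact h1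
  have h2' : perpBisector a' b = perpBisector c' d := by
    apply SetLike.coe_injective
    rw [← bisector_eq_perpBisector, ← bisector_eq_perpBisector]; exact h2
  have ho : o ∈ bisector a a' ∩ bisector c c' := hmeet ▸ rfl
  by_cases hdir : (perpBisector a b).direction = (perpBisector a' b).direction
  · -- parallel case: contradiction with hmeet
    exfalso
    have hba : b -ᵥ a ≠ 0 := vsub_ne_zero.mpr (Ne.symm hab)
    set S : Submodule ℝ (EuclideanSpace ℝ (Fin 2)) := ℝ ∙ (b -ᵥ a) with hS
    have hspan : (ℝ ∙ (b -ᵥ a') : Submodule ℝ _) = S := by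
      apply span_eq_of_orth_eq
      have := hdir.symm
      rwa [direction_perpBisector, direction_perpBisector] at this
    have hcdS : (ℝ ∙ (d -ᵥ c) : Submodule ℝ _) = S := by
      apply span_eq_of_orth_eq
      have := congrArg AffineSubspace.direction h1'.symm
      rwa [direction_perpBisector, direction_perpBisector] at this
    have hc'dS : (ℝ ∙ (d -ᵥ c') : Submodule ℝ _) = S := by
      apply span_eq_of_orth_eq
      have := congrArg AffineSubspace.direction h2'.symm
      rw [direction_perpBisector, direction_perpBisector] at this
      rw [this, hspan]
    have haaS : a' -ᵥ a ∈ S := by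
      have hx1 : b -ᵥ a ∈ S := Submodule.mem_span_singleton_self _
      have hx2 : b -ᵥ a' ∈ S := hspan ▸ Submodule.mem_span_singleton_self _
      have := S.sub_mem hx1 hx2
      rwa [vsub_sub_vsub_cancel_left] at this
    have hccS : c' -ᵥ c ∈ S := by
      have hx1 : d -ᵥ c ∈ S := hcdS ▸ Submodule.mem_span_singleton_self _
      have hx2 : d -ᵥ c' ∈ S := hc'dS ▸ Submodule.mem_span_singleton_self _
      have := S.sub_mem hx1 hx2
      rwa [vsub_sub_vsub_cancel_left] at this
    have hSfr : finrank ℝ S = 1 := finrank_span_singleton hba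
    have haaSpan : (ℝ ∙ (a' -ᵥ a) : Submodule ℝ _) = S := by
      apply Submodule.eq_of_le_of_finrank_eq
      · rwa [Submodule.span_singleton_le_iff_mem]
      · rw [hSfr, finrank_span_singleton (vsub_ne_zero.mpr (Ne.symm haa'))]
    have hccSpan : (ℝ ∙ (c' -ᵥ c) : Submodule ℝ _) = S := by
      apply Submodule.eq_of_le_of_finrank_eq
      · rwa [Submodule.span_singleton_le_iff_mem]
      · rw [hSfr, finrank_span_singleton (vsub_ne_zero.mpr (Ne.symm hcc'))]
    have hfrO : finrank ℝ (Sᗮ : Submodule ℝ _) = 1 := by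
      have h := Submodule.finrank_add_finrank_orthogonal (K := S)
      rw [hSfr, finrank_euclideanSpace_fin] at h
      omega
    obtain ⟨v, hvS, hv0⟩ : ∃ v ∈ Sᗮ, v ≠ 0 := by
      apply Submodule.exists_mem_ne_zero_of_ne_bot
      intro hbot
      rw [hbot, finrank_bot] at hfrO
      exact one_ne_zero hfrO.symm
    have hov1 : v +ᵥ o ∈ bisector a a' := by
      rw [bisector_eq_perpBisector]
      have hmem : o ∈ perpBisector a a' := by
        rw [← SetLike.mem_coe, ← bisector_eq_perpBisector]; exact ho.1
      have hd : v ∈ (perpBisector a a').direction := by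
        rw [direction_perpBisector, haaSpan]; exact hvS
      exact AffineSubspace.vadd_mem_of_mem_direction hd hmem
    have hov2 : v +ᵥ o ∈ bisector c c' := by
      rw [bisector_eq_perpBisector]
      have hmem : o ∈ perpBisector c c' := by
        rw [← SetLike.mem_coe, ← bisector_eq_perpBisector]; exact ho.2
      have hd : v ∈ (perpBisector c c').direction := by
        rw [direction_perpBisector, hccSpan]; exact hvS
      exact AffineSubspace.vadd_mem_of_mem_direction hd hmem
    have heq : v +ᵥ o ∈ ({o} : Set _) := hmeet ▸ ⟨hov1, hov2⟩
    have heq' : v +ᵥ o = o := heq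
    exact hv0 (vadd_right_cancel o (heq'.trans (zero_vadd (EuclideanSpace ℝ (Fin 2)) o).symm))
  · -- generic case: the two perpBisectors intersect, in a point equal to o
    have hsup : (perpBisector a b).direction ⊔ (perpBisector a' b).direction = ⊤ := by
      apply Submodule.eq_top_of_finrank_eq
      rw [finrank_euclideanSpace_fin]
      have hd1 : finrank ℝ (perpBisector a b).direction = 1 := by
        rw [direction_perpBisector]
        have h := Submodule.finrank_add_finrank_orthogonal
          (K := (ℝ ∙ (b -ᵥ a) : Submodule ℝ _))
        rw [finrank_span_singleton (vsub_ne_zero.mpr (Ne.symm hab)),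
          finrank_euclideanSpace_fin] at h
        omega
      have hlt : (perpBisector a b).direction < (perpBisector a b).direction ⊔
          (perpBisector a' b).direction := by
        rcases lt_or_eq_of_le (le_sup_left : (perpBisector a b).direction ≤ _) with h | h
        · exact h
        · exfalso
          have hle : (perpBisector a' b).direction ≤ (perpBisector a b).direction := by
            rw [h]; exact le_sup_right
          have hd2 : finrank ℝ (perpBisector a' b).direction = 1 := by
            rw [direction_perpBisector]
            have h := Submodule.finrank_add_finrank_orthogonal
              (K := (ℝ ∙ (b -ᵥ a') : Submodule ℝ _))
            rw [finrank_span_singleton (vsub_ne_zero.mpr (Ne.symm ha'b)),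
              finrank_euclideanSpace_fin] at h
            omega
          exact hdir (Submodule.eq_of_le_of_finrank_eq hle (hd2.trans hd1.symm)).symm
      have hge : 2 ≤ finrank ℝ ((perpBisector a b).direction ⊔
          (perpBisector a' b).direction : Submodule ℝ _) := by
        have := Submodule.finrank_lt_finrank_of_lt hlt
        omega
      have hle : finrank ℝ ((perpBisector a b).direction ⊔
          (perpBisector a' b).direction : Submodule ℝ _) ≤ 2 := by
        have := Submodule.finrank_le ((perpBisector a b).direction ⊔
          (perpBisector a' b).direction)
        rwa [finrank_euclideanSpace_fin] at this
      omega
    obtain ⟨x, hx1, hx2⟩ :=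
      AffineSubspace.inter_nonempty_of_nonempty_of_sup_direction_eq_top
        perpBisector_nonempty perpBisector_nonempty hsup
    have hxa : dist x a = dist x b := mem_perpBisector_iff_dist_eq.mp hx1
    have hxa' : dist x a' = dist x b := mem_perpBisector_iff_dist_eq.mp hx2
    have hxc : dist x c = dist x d := by
      have hxm : x ∈ bisector c d := h1 ▸ hxa
      exact hxm
    have hxc' : dist x c' = dist x d := by
      have hxm : x ∈ bisector c' d := h2 ▸ hxa'
      exact hxm
    have hxo : x = o := by
      have hxm : x ∈ ({o} : Set _) := hmeet ▸ ⟨hxa.trans hxa'.symm, hxc.trans hxc'.symm⟩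
      exact hxm
    subst hxo
    exact ⟨hxa.symm, hxc.symm⟩
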